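/- arXiv:1502.01442 — 2 statements merged into one kernel-verified Lean document; each statement's English description precedes it below -/
import Mathlib

section
/- Let G be a non-bipartite connected vertex-transitive finite simple graph of even order, not isomorphic to K₄ or K₆, and let C be a minimum odd cycle with |C| ≥ |G|/2. If a vertex v not on C is adjacent to two vertices u and w of C, then u and w are at distance 2 along C, and the vertices v, u, w together with the middle vertex of the length-2 subpath of C between u and w form a 4-cycle in G. -/
open SimpleGraph

variable {V : Type*}

/-- `G` has a perfect matching. -/
def HasPerfectMatching (G : SimpleGraph V) : Prop :=
  ∃ M : G.Subgraph, M.IsPerfectMatching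

/-- `F` is a matching preclusion set of `G`. -/
def IsMPSet (G : SimpleGraph V) (F : Finset (Sym2 V)) : Prop :=
  ↑F ⊆ G.edgeSet ∧ ¬ HasPerfectMatching (G.deleteEdges ↑F)

/-- The matching preclusion number of `G`. -/
noncomputable def mpNumber (G : SimpleGraph V) : ℕ :=
  sInf {n | ∃ F : Finset (Sym2 V), IsMPSet G F ∧ F.card = n}

/-- `G` is vertex-transitive. -/
def VertexTransitive (G : SimpleGraph V) : Prop :=
  ∀ x y : V, ∃ φ : G ≃g G, φ x = y

/-- The minimum degree of `G`. -/
noncomputable def minDeg (G : SimpleGraph V) : ℕ :=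
  sInf {d | ∃ v : V, (G.neighborSet v).ncard = d}

/-- The odd girth of `G`: the minimum length of an odd cycle. -/
noncomputable def oddGirth (G : SimpleGraph V) : ℕ :=
  sInf {n | Odd n ∧ ∃ (u : V) (c : G.Walk u u), c.IsCycle ∧ c.length = n}

/-!
Split the shortest odd cycle `C` at `u` and `w` into two arcs. Their lengths add up to the odd
number `|C|`, so one arc is odd; closing it up through `v` gives an odd cycle of length at most
`|C|`, whence that arc has length at least `|C| - 2` and the other arc, of even length, has
length exactly `2`. Its middle vertex is the required fourth vertex.
-/

namespace SimpleGraph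

variable {G : SimpleGraph V}

lemma oddGirth_le_length {u : V} {c : G.Walk u u} (hc : c.IsCycle) (hodd : Odd c.length) :
    oddGirth G ≤ c.length :=
  Nat.sInf_le ⟨hodd, u, c, hc, rfl⟩

namespace Walk

lemma IsPath.isCycle_cons_concat {u w v : V} {p : G.Walk u w} (hp : p.IsPath)
    (hv : v ∉ p.support) (huw : u ≠ w) (hvu : G.Adj v u) (hvw : G.Adj v w) :
    (cons hvu (p.concat hvw.symm)).IsCycle := by
  refine (cons_isCycle_iff _ hvu).mpr ⟨hp.concat hv hvw.symm, ?_⟩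
  rw [edges_concat, List.concat_eq_append, List.mem_append, List.mem_singleton, Sym2.eq_iff]
  rintro (he | ⟨rfl, rfl⟩ | ⟨-, rfl⟩)
  · exact hv (p.fst_mem_support_of_mem_edges he)
  · exact hv p.end_mem_support
  · exact huw rfl

lemma IsPath.oddGirth_le_length_add_two {u w v : V} {p : G.Walk u w} (hp : p.IsPath)
    (hodd : Odd p.length) (hv : v ∉ p.support) (huw : u ≠ w) (hvu : G.Adj v u)
    (hvw : G.Adj v w) : oddGirth G ≤ p.length + 2 := by
  have hlen : (cons hvu (p.concat hvw.symm)).length = p.length + 2 := by simp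
  exact hlen ▸ oddGirth_le_length (hp.isCycle_cons_concat hv huw hvu hvw)
    (hlen ▸ hodd.add_even even_two)

lemma IsPath.exists_middle_of_length_eq_two {u w : V} {q : G.Walk u w} (hq : q.IsPath)
    (h2 : q.length = 2) :
    ∃ x ∈ q.support, x ≠ u ∧ x ≠ w ∧ s(u, x) ∈ q.edges ∧ s(x, w) ∈ q.edges := by
  match q, hq, h2 with
  | cons (v := x) _ (cons _ .nil), hq, _ =>
    have hnd := hq.support_nodup
    simp only [support_cons, support_nil, List.nodup_cons, List.mem_cons,
      List.not_mem_nil, not_or] at hnd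
    exact ⟨x, by simp, Ne.symm hnd.1.1, hnd.2.1.1, by simp, by simp⟩

lemma IsCycle.exists_arc_length_two {u w v : V} {c : G.Walk u u} (hc : c.IsCycle)
    (hodd : Odd c.length) (hmin : c.length ≤ oddGirth G) (hw : w ∈ c.support) (huw : u ≠ w)
    (hv : v ∉ c.support) (hvu : G.Adj v u) (hvw : G.Adj v w) :
    ∃ q : G.Walk u w,
      q.IsPath ∧ q.length = 2 ∧ q.support ⊆ c.support ∧ q.edges ⊆ c.edges := by
  classical
  set p := c.takeUntil w hw
  set r := c.dropUntil w hw
  have hspec : p.append r = c := c.take_spec hw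
  have hp : p.IsPath := hc.isPath_takeUntil hw
  have hr : r.IsPath := (hspec ▸ hc).isPath_of_append_right (not_nil_of_ne huw)
  have hpv : v ∉ p.support := fun h => hv (c.support_takeUntil_subset_support hw h)
  have hrv : v ∉ r.support := fun h => hv (c.support_dropUntil_subset_support hw h)
  have hsum : p.length + r.length = c.length := by rw [← hspec, length_append]
  have hp0 : p.length ≠ 0 := fun h => huw (eq_of_length_eq_zero h)
  have hr0 : r.length ≠ 0 := fun h => huw (eq_of_length_eq_zero h).symm
  rcases Nat.even_or_odd p.length with hpe | hpo
  · have hro : Odd r.length := by rw [← hsum] at hodd; exact (Nat.odd_add'.mp hodd).mpr hpe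
    have hle := hr.oddGirth_le_length_add_two hro hrv huw.symm hvw hvu
    refine ⟨p, hp, ?_, c.support_takeUntil_subset_support hw, c.edges_takeUntil_subset_edges hw⟩
    rcases hpe with ⟨k, hk⟩
    omega
  · have hle := hp.oddGirth_le_length_add_two hpo hpv huw hvu hvw
    have hre : Even r.length := by rw [← hsum] at hodd; exact (Nat.odd_add.mp hodd).mp hpo
    refine ⟨r.reverse, hr.reverse, ?_, ?_, ?_⟩
    · rcases hre with ⟨k, hk⟩
      rw [length_reverse]
      omega
    · simpa using c.support_dropUntil_subset_support hw
    · simpa using c.edges_dropUntil_subset_edges hw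

end Walk

end SimpleGraph

theorem stmt5_general (G : SimpleGraph V)
    (u₀ : V) (C : G.Walk u₀ u₀) (hC : C.IsCycle) (hCodd : Odd C.length)
    (hCmin : C.length = oddGirth G)
    (v u w : V) (hv : v ∉ C.support) (hu : u ∈ C.support) (hw : w ∈ C.support)
    (huw : u ≠ w) (hvu : G.Adj v u) (hvw : G.Adj v w) :
    ∃ x : V, x ∈ C.support ∧ x ≠ u ∧ x ≠ w ∧ x ≠ v ∧
      s(u, x) ∈ C.edges ∧ s(x, w) ∈ C.edges ∧
      G.Adj v u ∧ G.Adj u x ∧ G.Adj x w ∧ G.Adj w v := by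
  classical
  have hedges : (C.rotate u hu).edges ⊆ C.edges := (C.rotate_edges u hu).perm.subset
  obtain ⟨q, hq, hq2, hqs, hqe⟩ :=
    (hC.rotate hu).exists_arc_length_two (by simpa using hCodd) (by simpa using hCmin.le)
      (by simpa using hw) huw (by simpa using hv) hvu hvw
  obtain ⟨x, hxq, hxu, hxw, hqux, hqxw⟩ := hq.exists_middle_of_length_eq_two hq2
  have hxC : x ∈ C.support := by simpa using hqs hxq
  have hux : s(u, x) ∈ C.edges := hedges (hqe hqux)
  have hxw' : s(x, w) ∈ C.edges := hedges (hqe hqxw)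
  exact ⟨x, hxC, hxu, hxw, fun h => hv (h ▸ hxC), hux, hxw', hvu, C.adj_of_mem_edges hux,
    C.adj_of_mem_edges hxw', hvw.symm⟩

theorem stmt5 [Fintype V] (G : SimpleGraph V)
    (hconn : G.Connected) (hvt : VertexTransitive G)
    (hnb : ¬ G.Colorable 2) (heven : Even (Fintype.card V))
    (hK4 : IsEmpty (G ≃g (⊤ : SimpleGraph (Fin 4))))
    (hK6 : IsEmpty (G ≃g (⊤ : SimpleGraph (Fin 6))))
    (u₀ : V) (C : G.Walk u₀ u₀) (hC : C.IsCycle) (hCodd : Odd C.length)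
    (hCmin : C.length = oddGirth G)
    (hClen : Fintype.card V ≤ 2 * C.length)
    (v u w : V) (hv : v ∉ C.support) (hu : u ∈ C.support) (hw : w ∈ C.support)
    (huw : u ≠ w) (hvu : G.Adj v u) (hvw : G.Adj v w) :
    ∃ x : V, x ∈ C.support ∧ x ≠ u ∧ x ≠ w ∧ x ≠ v ∧
      s(u, x) ∈ C.edges ∧ s(x, w) ∈ C.edges ∧
      G.Adj v u ∧ G.Adj u x ∧ G.Adj x w ∧ G.Adj w v :=
  stmt5_general G u₀ C hC hCodd hCmin v u w hv hu hw huw hvu hvw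
end

section
/- Let G be a k-regular connected non-bipartite vertex-transitive finite simple graph of even order admitting a partition V(G) = S ∪ S̄ with |S| = |S̄| + 2 and S̄ an independent set. Then 3 ≤ k ≤ 4. -/
/-!
Let `C` be a shortest odd cycle of `G`, of length `g`. An independent set meets every image of `C`
under an automorphism in at most `(g - 1) / 2` vertices; averaging over the transitive
automorphism group turns this into `|S̄| g ≤ |G| (g - 1) / 2`, i.e. `|G| ≤ 2g`. If `g ≥ 5`, no
vertex has three neighbours on `C` (it would close a shorter odd cycle), so counting the edges
leaving `C` gives `g (k - 2) ≤ 2 (|G| - g) ≤ 2g`. If `g = 3`, then `|G| ≤ 6` and a vertex of `S̄`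
has all its `k` neighbours in `S`, so `k ≤ |S| ≤ 4`. Finally `k = 2` would make `G` the cycle `C`
itself, of odd order.
-/

open SimpleGraph

variable {V : Type*}

/-- `G` is `k`-regular. -/
def GIsRegular (G : SimpleGraph V) (k : ℕ) : Prop :=
  ∀ v : V, (G.neighborSet v).ncard = k

open Finset

section Averaging

variable {Γ X : Type*} [Group Γ] [MulAction Γ X] [MulAction.IsPretransitive Γ X]
  [Fintype Γ] [DecidableEq X]

lemma card_filter_smul_eq (a y : X) : #{π : Γ | π • a = y} = #{π : Γ | π • a = a} := by
  obtain ⟨τ, rfl⟩ := MulAction.exists_smul_eq Γ a y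
  exact card_equiv (Equiv.mulLeft τ⁻¹) fun π => by simp [mul_smul, inv_smul_eq_iff]

lemma card_filter_smul_mem_mul_card [Fintype X] (a : X) (B : Finset X) :
    #{π : Γ | π • a ∈ B} * Fintype.card X = #B * Fintype.card Γ := by
  have fibers (s : Finset X) : #{π : Γ | π • a ∈ s} = #s * #{π : Γ | π • a = a} := by
    rw [← sum_card_fiberwise_eq_card_filter, sum_congr rfl fun y _ => card_filter_smul_eq a y,
      sum_const, smul_eq_mul]
  have hΓ : Fintype.card Γ = Fintype.card X * #{π : Γ | π • a = a} := by simpa using fibers univ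
  rw [fibers, hΓ]
  ring

lemma card_mul_card_le_of_forall_card_filter_smul_mem_le [Fintype X] (A B : Finset X) {m : ℕ}
    (h : ∀ π : Γ, #{a ∈ A | π • a ∈ B} ≤ m) : #A * #B ≤ m * Fintype.card X := by
  have double_count : ∑ π : Γ, #{a ∈ A | π • a ∈ B} = ∑ a ∈ A, #{π : Γ | π • a ∈ B} :=
    sum_card_bipartiteAbove_eq_sum_card_bipartiteBelow (fun π a => π • a ∈ B)
  have hΓ : 0 < Fintype.card Γ := Fintype.card_pos
  refine Nat.le_of_mul_le_mul_right ?_ hΓ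
  calc #A * #B * Fintype.card Γ = (∑ a ∈ A, #{π : Γ | π • a ∈ B}) * Fintype.card X := by
        rw [sum_mul, sum_congr rfl fun a _ => card_filter_smul_mem_mul_card a B, sum_const,
          smul_eq_mul, mul_assoc]
    _ = (∑ π : Γ, #{a ∈ A | π • a ∈ B}) * Fintype.card X := by rw [double_count]
    _ ≤ (∑ _π : Γ, m) * Fintype.card X := by gcongr with π; exact h π
    _ = m * Fintype.card X * Fintype.card Γ := by rw [sum_const, card_univ, smul_eq_mul]; ring

end Averaging

lemma Function.Periodic.card_filter_range_le_half {p : ℕ → Prop} [DecidablePred p] {g : ℕ}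
    (hp : Function.Periodic p g) (h : ∀ i, p i → ¬ p (i + 1)) :
    #{i ∈ range g | p i} ≤ g / 2 := by
  have : #{i ∈ range g | p i} ≤ #{i ∈ range g | ¬ p i} := by
    refine card_le_card_of_injOn (fun i => (i + 1) % g) (fun i hi => ?_) fun i hi j hj hij => ?_
    · simp only [coe_filter, mem_range, Set.mem_ofPred_eq] at hi ⊢
      exact ⟨Nat.mod_lt _ (by omega), hp.map_mod_nat (i + 1) ▸ h i hi.2⟩
    · simp only [coe_filter, mem_range, Set.mem_ofPred_eq] at hi hj
      exact (Nat.ModEq.add_right_cancel' 1 hij).eq_of_lt_of_lt hi.1 hj.1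
  have := card_filter_add_card_filter_not (s := range g) (fun i => p i)
  rw [card_range] at this
  omega

lemma GIsRegular.isRegularOfDegree {G : SimpleGraph V} [Fintype V] [DecidableRel G.Adj] {k : ℕ}
    (h : GIsRegular G k) : G.IsRegularOfDegree k := fun v => by
  rw [← h v, ← card_neighborFinset_eq_degree, ← Set.ncard_coe_finset, coe_neighborFinset]

namespace SimpleGraph

variable {G : SimpleGraph V}

lemma exists_walk_length_eq_of_forall_adj {c : ℕ → V} (hc : ∀ i, G.Adj (c i) (c (i + 1)))
    (i d : ℕ) : ∃ p : G.Walk (c i) (c (i + d)), p.length = d := by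
  induction d with
  | zero => exact ⟨Walk.nil, rfl⟩
  | succ d ih =>
    obtain ⟨p, hp⟩ := ih
    exact ⟨(p.concat (hc (i + d))).copy rfl (by rw [add_assoc]), by simp [hp]⟩

/-- Encoded as the `g`-periodic sequence of its vertices. -/
structure IsShortestOddCycle (G : SimpleGraph V) (c : ℕ → V) (g : ℕ) : Prop where
  adj : ∀ i, G.Adj (c i) (c (i + 1))
  periodic : Function.Periodic c g
  odd : Odd g
  le_length : ∀ v (w : G.Walk v v), Odd w.length → g ≤ w.length

lemma exists_isShortestOddCycle (hG : ¬ G.Colorable 2) : ∃ c g, G.IsShortestOddCycle c g := by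
  classical
  have hodd : ∃ L, Odd L ∧ ∃ v, ∃ w : G.Walk v v, w.length = L := by
    simp_rw [two_colorable_iff_forall_loop_even, not_forall, Nat.not_even_iff_odd] at hG
    obtain ⟨v, w, hw⟩ := hG
    exact ⟨_, hw, v, w, rfl⟩
  obtain ⟨hg, v, w, hw⟩ := Nat.find_spec hodd
  set g := Nat.find hodd
  have hg1 : 1 < g := by
    rcases hg with ⟨t, ht⟩
    rcases t with _ | t
    · exact absurd (w.adj_of_length_eq_one (by omega)) (G.loopless.irrefl v)
    · omega
  refine ⟨fun i => w.getVert (i % g), g, ⟨fun i => ?_, fun i => by simp, hg,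
    fun u p hp => Nat.find_min' hodd ⟨hp, u, p, rfl⟩⟩⟩
  rcases Nat.lt_or_ge (i % g + 1) g with h | h
  · rw [Nat.add_mod, Nat.mod_eq_of_lt hg1, Nat.mod_eq_of_lt h]
    exact w.adj_getVert_succ (by omega)
  · have hi : i % g + 1 = g := le_antisymm (Nat.mod_lt _ (by omega)) h
    have hclosed : w.getVert g = w.getVert 0 := by rw [← hw, w.getVert_length, w.getVert_zero]
    have hlast := w.adj_getVert_succ (i := i % g) (by omega)
    rw [hi, hclosed] at hlast
    rwa [Nat.add_mod, Nat.mod_eq_of_lt hg1, hi, Nat.mod_self]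

namespace IsShortestOddCycle

variable {c : ℕ → V} {g : ℕ}

lemma three_le (h : G.IsShortestOddCycle c g) : 3 ≤ g := by
  have hg1 : g ≠ 1 := fun hg => (h.adj 0).ne (by simpa [hg] using (h.periodic 0).symm)
  obtain ⟨t, ht⟩ := h.odd
  omega

lemma le_of_apply_add_eq (h : G.IsShortestOddCycle c g) {i d : ℕ} (hd : Odd d)
    (hi : c (i + d) = c i) : g ≤ d := by
  obtain ⟨p, hp⟩ := exists_walk_length_eq_of_forall_adj h.adj i d
  simpa [hp] using h.le_length _ (p.copy rfl hi) (by simpa [hp])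

lemma apply_ne (h : G.IsShortestOddCycle c g) {i j : ℕ} (hij : i < j) (hji : j < i + g) :
    c i ≠ c j := by
  intro heq
  rcases Nat.even_or_odd (j - i) with he | ho
  · have hodd : Odd (i + g - j) := by
      obtain ⟨t, ht⟩ := h.odd; obtain ⟨s, hs⟩ := he
      exact ⟨t - s, by omega⟩
    have := h.le_of_apply_add_eq hodd (i := j)
      (by rw [show j + (i + g - j) = i + g by omega, h.periodic, heq])
    omega
  · have := h.le_of_apply_add_eq ho (i := i) (by rw [Nat.add_sub_cancel' hij.le, heq])
    omega

lemma injOn (h : G.IsShortestOddCycle c g) : Set.InjOn c (Set.Iio g) := by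
  intro i hi j hj hij
  simp only [Set.mem_Iio] at hi hj
  by_contra hne
  rcases Nat.lt_or_gt_of_ne hne with hlt | hlt
  · exact h.apply_ne hlt (by omega) hij
  · exact h.apply_ne hlt (by omega) hij.symm

lemma adj_add_sub_one (h : G.IsShortestOddCycle c g) (i : ℕ) : G.Adj (c i) (c (i + g - 1)) := by
  have := h.adj (i + g - 1)
  rwa [show i + g - 1 + 1 = i + g by have := h.three_le; omega, h.periodic, G.adj_comm] at this

/-- Otherwise `x` closes a shorter odd cycle with one of the two arcs from `c i` to `c j`. -/
lemma eq_add_two_or_add_two_eq (h : G.IsShortestOddCycle c g) {x : V} {i j : ℕ} (hij : i < j)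
    (hji : j < i + g) (hxi : G.Adj x (c i)) (hxj : G.Adj x (c j)) : j = i + 2 ∨ j + 2 = i + g := by
  obtain ⟨t, ht⟩ := h.odd
  rcases Nat.even_or_odd (j - i) with ⟨s, hs⟩ | ⟨s, hs⟩
  · obtain ⟨p, hp⟩ := exists_walk_length_eq_of_forall_adj h.adj j (i + g - j)
    have hend : c (j + (i + g - j)) = c i := by
      rw [show j + (i + g - j) = i + g by omega, h.periodic]
    have := h.le_length x ((Walk.cons hxj (p.copy rfl hend)).concat hxi.symm)
    simp only [Walk.length_concat, Walk.length_cons, Walk.length_copy, hp] at this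
    have := this ⟨t - s + 1, by omega⟩
    omega
  · obtain ⟨p, hp⟩ := exists_walk_length_eq_of_forall_adj h.adj i (j - i)
    have hend : c (i + (j - i)) = c j := by rw [Nat.add_sub_cancel' hij.le]
    have := h.le_length x ((Walk.cons hxi (p.copy rfl hend)).concat hxj.symm)
    simp only [Walk.length_concat, Walk.length_cons, Walk.length_copy, hp] at this
    have := this ⟨s + 1, by omega⟩
    omega

lemma card_filter_adj_le_two (h : G.IsShortestOddCycle c g) [DecidableRel G.Adj] (hg : 5 ≤ g)
    (x : V) : #{i ∈ range g | G.Adj x (c i)} ≤ 2 := by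
  by_contra! h3
  obtain ⟨a, b, d, ha, hb, hd, hab, had, hbd⟩ := two_lt_card_iff.1 h3
  simp only [mem_filter, mem_range] at ha hb hd
  have apart : ∀ i j, i < g ∧ G.Adj x (c i) → j < g ∧ G.Adj x (c j) → i ≠ j →
      j = i + 2 ∨ j + 2 = i + g ∨ i = j + 2 ∨ i + 2 = j + g := by
    intro i j hi hj hij
    rcases Nat.lt_or_gt_of_ne hij with hlt | hlt
    · have := h.eq_add_two_or_add_two_eq hlt (by omega) hi.2 hj.2; omega
    · have := h.eq_add_two_or_add_two_eq hlt (by omega) hj.2 hi.2; omega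
  have := apart a b ha hb hab
  have := apart a d ha hd had
  have := apart b d hb hd hbd
  obtain ⟨t, ht⟩ := h.odd
  omega

section Image

variable [DecidableEq V]

lemma apply_mem_image (h : G.IsShortestOddCycle c g) (i : ℕ) : c i ∈ (range g).image c :=
  mem_image.2 ⟨i % g, mem_range.2 (Nat.mod_lt _ (by have := h.three_le; omega)),
    h.periodic.map_mod_nat i⟩

lemma card_image_range (h : G.IsShortestOddCycle c g) : #((range g).image c) = g := by
  rw [card_image_of_injOn (by rw [coe_range]; exact h.injOn), card_range]

lemma card_pair (h : G.IsShortestOddCycle c g) (i : ℕ) : #{c (i + 1), c (i + g - 1)} = 2 :=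
  Finset.card_pair (h.apply_ne (by have := h.three_le; omega) (by omega))

lemma card_filter_adj_mem_image_le_two (h : G.IsShortestOddCycle c g) [DecidableRel G.Adj]
    (hg : 5 ≤ g) (x : V) :
    #{y ∈ (range g).image c | G.Adj x y} ≤ 2 := by
  rw [filter_image]
  exact card_image_le.trans (h.card_filter_adj_le_two hg x)

end Image

section Degree

variable [Fintype V] [DecidableEq V] [DecidableRel G.Adj]

lemma pair_subset_neighborFinset (h : G.IsShortestOddCycle c g) (i : ℕ) :
    {c (i + 1), c (i + g - 1)} ⊆ G.neighborFinset (c i) := by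
  intro y hy
  rw [mem_insert, mem_singleton] at hy
  rw [mem_neighborFinset]
  rcases hy with rfl | rfl
  exacts [h.adj i, h.adj_add_sub_one i]

lemma two_le_degree (h : G.IsShortestOddCycle c g) (i : ℕ) : 2 ≤ G.degree (c i) := by
  rw [← card_neighborFinset_eq_degree, ← h.card_pair i]
  exact card_le_card (h.pair_subset_neighborFinset i)

/-- With degree `2`, the vertex set of the cycle is closed under adjacency. -/
lemma card_eq_of_isRegularOfDegree_two (h : G.IsShortestOddCycle c g) (hG : G.Connected)
    (hreg : G.IsRegularOfDegree 2) : Fintype.card V = g := by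
  set T := (range g).image c
  have closed : ∀ x ∈ T, ∀ y, G.Adj x y → y ∈ T := by
    intro x hx y hxy
    obtain ⟨i, -, rfl⟩ := mem_image.1 hx
    have hN : {c (i + 1), c (i + g - 1)} = G.neighborFinset (c i) :=
      eq_of_subset_of_card_le (h.pair_subset_neighborFinset i)
        (by rw [card_neighborFinset_eq_degree, hreg.degree_eq, h.card_pair])
    rw [← mem_neighborFinset, ← hN, mem_insert, mem_singleton] at hxy
    rcases hxy with rfl | rfl
    exacts [h.apply_mem_image _, h.apply_mem_image _]
  have hT : T = univ := by
    refine eq_univ_of_forall fun y => by_contra fun hy => ?_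
    obtain ⟨d, -, hd, hd'⟩ := (hG.preconnected (c 0) y).some.exists_boundary_dart
      (T : Set V) (h.apply_mem_image 0) hy
    exact hd' (closed _ hd _ d.adj)
  rw [← card_univ, ← hT, h.card_image_range]

/-- Count the edges leaving the cycle: each cycle vertex sends at least `k - 2` of them, each
outside vertex receives at most `2`. -/
lemma mul_sub_two_le (h : G.IsShortestOddCycle c g) {k : ℕ} (hreg : G.IsRegularOfDegree k)
    (hg : 5 ≤ g) : g * (k - 2) ≤ (Fintype.card V - g) * 2 := by
  set T := (range g).image c
  have := card_mul_le_card_mul G.Adj (s := T) (t := Tᶜ) (m := k - 2) (n := 2) (fun a _ => ?_)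
    (fun b _ => ?_)
  · rwa [h.card_image_range, card_compl, h.card_image_range] at this
  · have : k ≤ 2 + #{b ∈ Tᶜ | G.Adj a b} :=
      calc k = #{b | G.Adj a b} := by
            rw [← neighborFinset_eq_filter, card_neighborFinset_eq_degree, hreg.degree_eq]
        _ = #({b ∈ T | G.Adj a b} ∪ {b ∈ Tᶜ | G.Adj a b}) := by rw [← filter_union, union_compl]
        _ ≤ 2 + #{b ∈ Tᶜ | G.Adj a b} :=
            (card_union_le _ _).trans (by gcongr; exact h.card_filter_adj_mem_image_le_two hg a)
    show k - 2 ≤ #{b ∈ Tᶜ | G.Adj a b}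
    omega
  · simpa only [bipartiteBelow, G.adj_comm _ b] using h.card_filter_adj_mem_image_le_two hg b

lemma three_le_of_isRegularOfDegree (h : G.IsShortestOddCycle c g) (hG : G.Connected) {k : ℕ}
    (hreg : G.IsRegularOfDegree k) (hV : Even (Fintype.card V)) : 3 ≤ k := by
  have h2 : 2 ≤ k := hreg.degree_eq (c 0) ▸ h.two_le_degree 0
  have h3 : k ≠ 2 := by
    rintro rfl
    rw [h.card_eq_of_isRegularOfDegree_two hG hreg] at hV
    exact Nat.not_even_iff_odd.2 h.odd hV
  omega

end Degree

lemma mul_card_le_of_forall_not_adj [Fintype V] (h : G.IsShortestOddCycle c g)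
    (hG : VertexTransitive G) {I : Finset V} (hI : ∀ a ∈ I, ∀ b ∈ I, ¬ G.Adj a b) :
    g * #I ≤ g / 2 * Fintype.card V := by
  classical
  have : MulAction.IsPretransitive (G ≃g G) V := ⟨hG⟩
  have : Finite (G ≃g G) := Finite.of_injective _ RelIso.coe_fn_injective
  have := Fintype.ofFinite (G ≃g G)
  calc g * #I = #((range g).image c) * #I := by rw [h.card_image_range]
    _ ≤ g / 2 * Fintype.card V := by
      refine card_mul_card_le_of_forall_card_filter_smul_mem_le (Γ := G ≃g G) _ _ fun φ => ?_
      calc #{a ∈ (range g).image c | φ • a ∈ I} ≤ #{i ∈ range g | φ (c i) ∈ I} := by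
            rw [filter_image]; exact card_image_le
        _ ≤ g / 2 := (h.periodic.comp fun v => φ v ∈ I).card_filter_range_le_half
            fun i hi hi' => hI _ hi _ hi' (φ.map_adj_iff.2 (h.adj i))

lemma card_le_two_mul [Fintype V] (h : G.IsShortestOddCycle c g) (hG : VertexTransitive G)
    {I : Set V} (hI : ∀ a ∈ I, ∀ b ∈ I, ¬ G.Adj a b) (hV : Fintype.card V ≤ 2 * I.ncard + 2) :
    Fintype.card V ≤ 2 * g := by
  classical
  have := h.mul_card_le_of_forall_not_adj hG (I := I.toFinset) (by simpa using hI)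
  rw [← Set.ncard_eq_toFinset_card'] at this
  obtain ⟨t, rfl⟩ := h.odd
  rw [show (2 * t + 1) / 2 = t by omega] at this
  nlinarith

end IsShortestOddCycle

end SimpleGraph

theorem stmt7 [Fintype V] (G : SimpleGraph V) (k : ℕ)
    (hreg : GIsRegular G k) (hconn : G.Connected)
    (hvt : VertexTransitive G) (hnb : ¬ G.Colorable 2)
    (heven : Even (Fintype.card V)) (S : Set V)
    (hind : ∀ a ∈ Sᶜ, ∀ b ∈ Sᶜ, ¬ G.Adj a b)
    (hcard : S.ncard = Sᶜ.ncard + 2) :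
    3 ≤ k ∧ k ≤ 4 := by
  classical
  obtain ⟨c, g, hc⟩ := exists_isShortestOddCycle hnb
  have hdeg : G.IsRegularOfDegree k := hreg.isRegularOfDegree
  have hS : S.ncard + Sᶜ.ncard = Fintype.card V := by
    rw [Set.ncard_add_ncard_compl, Nat.card_eq_fintype_card]
  have hn : Fintype.card V ≤ 2 * g := hc.card_le_two_mul hvt hind (by omega)
  refine ⟨hc.three_le_of_isRegularOfDegree hconn hdeg heven, ?_⟩
  rcases Nat.lt_or_ge g 5 with hg3 | hg5
  · have hg : g ≤ Fintype.card V := hc.card_image_range ▸ card_le_univ _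
    obtain ⟨t, ht⟩ := hc.odd
    have := hc.three_le
    obtain ⟨a, ha⟩ : Sᶜ.Nonempty := Set.nonempty_of_ncard_ne_zero (by omega)
    have hN : G.neighborSet a ⊆ S := fun b hab => by_contra fun hb => hind a ha b hb hab
    have := Set.ncard_le_ncard hN
    rw [hreg a] at this
    omega
  · have : g * (k - 2) ≤ g * 2 := (hc.mul_sub_two_le hdeg hg5).trans (by gcongr; omega)
    have := Nat.le_of_mul_le_mul_left this (by omega)
    omega
end
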